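/- For every u in the space °U of grid functions vanishing on the boundary of the d-dimensional grid: (2/3)^d |u|_1² ≤ (A_h u, −Δ_h u) ≤ |u|_1². -/

import Mathlib

open Classical

noncomputable section

/-- an index `j` is interior if `1 ≤ j k ≤ m k − 1` in every coordinate. -/
def interiorIdx (d : ℕ) (m : Fin d → ℕ) (j : Fin d → ℕ) : Prop :=
  ∀ k, 1 ≤ j k ∧ j k ≤ m k - 1

/-- the shift `j + δ_k`. -/
def up {d : ℕ} (k : Fin d) (j : Fin d → ℕ) : Fin d → ℕ :=
  Function.update j k (j k + 1)

/-- the shift `j − δ_k`. -/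
def down {d : ℕ} (k : Fin d) (j : Fin d → ℕ) : Fin d → ℕ :=
  Function.update j k (j k - 1)

/-- the second difference operator `δ_k²`. -/
def d2 {d : ℕ} (Δx : Fin d → ℝ) (k : Fin d) (u : (Fin d → ℕ) → ℝ) : (Fin d → ℕ) → ℝ :=
  fun j => (u (up k j) - 2 * u j + u (down k j)) / (Δx k) ^ 2

/-- the averaging operator `A_k` (identity at boundary indices). -/
def Aop {d : ℕ} (m : Fin d → ℕ) (k : Fin d) (u : (Fin d → ℕ) → ℝ) : (Fin d → ℕ) → ℝ :=
  fun j => if interiorIdx d m j then (u (down k j) + 10 * u j + u (up k j)) / 12 else u j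

/-- the discrete Laplacian `Δ_h = Σ_k δ_k²`. -/
def lapH {d : ℕ} (Δx : Fin d → ℝ) (u : (Fin d → ℕ) → ℝ) : (Fin d → ℕ) → ℝ :=
  fun j => ∑ k, d2 Δx k u j

/-- the compact operator `A_h = ∏_k A_k`. -/
def Ah {d : ℕ} (m : Fin d → ℕ) (u : (Fin d → ℕ) → ℝ) : (Fin d → ℕ) → ℝ :=
  (List.finRange d).foldr (fun k v => Aop m k v) u

/-- the operator `Λ_h = Σ_k (∏_{l≠k} A_l) δ_k²`. -/
def LamH {d : ℕ} (m : Fin d → ℕ) (Δx : Fin d → ℝ) (u : (Fin d → ℕ) → ℝ) :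
    (Fin d → ℕ) → ℝ :=
  fun j => ∑ k,
    ((List.finRange d).foldr (fun l v => if l = k then v else Aop m l v) (d2 Δx k u)) j

/-- the discrete inner product `(u,w) = (∏_r Δx^{(r)}) Σ_{j interior} u_j w_j`. -/
def ip {d : ℕ} (m : Fin d → ℕ) (Δx : Fin d → ℝ) (u w : (Fin d → ℕ) → ℝ) : ℝ :=
  (∏ r, Δx r) * ∑ j ∈ Fintype.piFinset (fun k => Finset.Icc 1 (m k - 1)), u j * w j

/-- membership in `°U`: the grid function vanishes at every non-interior index. -/
def zeroBnd {d : ℕ} (m : Fin d → ℕ) (u : (Fin d → ℕ) → ℝ) : Prop :=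
  ∀ j, ¬ interiorIdx d m j → u j = 0

/-- the squared seminorm `|u|²_{1,k}`. -/
def semi1sq {d : ℕ} (m : Fin d → ℕ) (Δx : Fin d → ℝ) (k : Fin d)
    (u : (Fin d → ℕ) → ℝ) : ℝ :=
  (∏ r, Δx r) *
    ∑ j ∈ Fintype.piFinset
      (fun l => if l = k then Finset.range (m l) else Finset.Icc 1 (m l - 1)),
      ((u (up k j) - u j) / Δx k) ^ 2

/-- the squared seminorm `|u|₁² = Σ_k |u|²_{1,k}`. -/
def norm1sq {d : ℕ} (m : Fin d → ℕ) (Δx : Fin d → ℝ) (u : (Fin d → ℕ) → ℝ) : ℝ :=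
  ∑ k, semi1sq m Δx k u

/-!
With zero boundary values, grid functions form a Euclidean space on which each `-δ_k²` is a
symmetric operator `T_k`; summation by parts gives `(u, T_k u) = |u|²_{1,k}` and
`0 ≤ T_k ≤ 4 / Δx_k²`, and the `T_k` commute. Hence `A_k = 1 - (Δx_k² / 12) T_k` lies between
`2/3` and `1` in the Loewner order. Products of commuting positive operators are positive
(decompose into joint eigenspaces), so `(2/3)^d ≤ A_h ≤ 1`, and `A_h` commutes with every `T_k`.
Therefore `(A_h u, T_k u)` lies between `(2/3)^d (u, T_k u)` and `(u, T_k u)`; sum over `k`.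
-/

open scoped InnerProductSpace
open Module.End

namespace LinearMap

variable {E : Type*} [NormedAddCommGroup E] [InnerProductSpace ℝ E]

theorem IsPositive.mul_of_commute [FiniteDimensional ℝ E] {S T : E →ₗ[ℝ] E}
    (hS : S.IsPositive) (hT : T.IsPositive) (hST : Commute S T) : (S * T).IsPositive := by
  refine (isPositive_iff _).2 ⟨fun x y => ?_, fun x => ?_⟩
  · rw [mul_apply, hS.isSymmetric, hT.isSymmetric, ← mul_apply, hST.eq]
  set V : ℝ × ℝ → Submodule ℝ E := fun i => eigenspace S i.2 ⊓ eigenspace T i.1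
  have hV : OrthogonalFamily ℝ (fun i => V i) fun i => (V i).subtypeₗᵢ :=
    hS.isSymmetric.orthogonalFamily_eigenspace_inf_eigenspace hT.isSymmetric
  have htop : ⨆ i, V i = ⊤ := by
    rw [iSup_prod, iSup_comm]
    exact hS.isSymmetric.iSup_iSup_eigenspace_inf_eigenspace_eq_top_of_commute hT.isSymmetric hST
  obtain ⟨f, hfV, rfl⟩ := (Submodule.mem_iSup_iff_exists_finsupp V x).1 (htop ▸ Submodule.mem_top)
  have hSf : ∀ i, S (f i) = i.2 • f i := fun i => mem_eigenspace_iff.1 (hfV i).1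
  have hTf : ∀ i, T (f i) = i.1 • f i := fun i => mem_eigenspace_iff.1 (hfV i).2
  have hSTf : ∀ i, (S * T) (f i) = (i.2 * i.1) • f i := by
    intro i; rw [mul_apply, hTf, map_smul, hSf, smul_smul, mul_comm]
  have key := hV.inner_sum (fun i => ⟨(i.2 * i.1) • f i, (V i).smul_mem _ (hfV i)⟩)
    (fun i => ⟨f i, hfV i⟩) f.support
  simp only [Submodule.coe_subtypeₗᵢ, Submodule.coe_subtype, Submodule.coe_inner] at key
  rw [Finsupp.sum, map_sum, Finset.sum_congr rfl fun i _ => hSTf i, key]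
  refine Finset.sum_nonneg fun i _ => ?_
  have hSi := hS.inner_nonneg_left (f i)
  have hTi := hT.inner_nonneg_left (f i)
  rw [hSf, real_inner_smul_left] at hSi
  rw [hTf, real_inner_smul_left] at hTi
  rw [real_inner_smul_left]
  rcases (real_inner_self_nonneg (x := f i)).eq_or_lt with h | h
  · rw [← h, mul_zero]
  · have := nonneg_of_mul_nonneg_left hSi h
    have := nonneg_of_mul_nonneg_left hTi h
    positivity

theorem smul_one_nonneg {c : ℝ} (hc : 0 ≤ c) : 0 ≤ c • (1 : E →ₗ[ℝ] E) :=
  (nonneg_iff_isPositive _).2 (isPositive_one.smul_of_nonneg hc)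

theorem one_sub_smul_mem_Icc {T : E →ₗ[ℝ] E} {a c : ℝ} (ha : 0 ≤ a) (hT : T ∈ Set.Icc 0 (c • 1)) :
    1 - a • T ∈ Set.Icc ((1 - a * c) • 1) 1 := by
  constructor
  · rw [le_def, show 1 - a • T - (1 - a * c) • (1 : E →ₗ[ℝ] E) = a • (c • 1 - T) by module]
    exact (hT.2 : (c • 1 - T).IsPositive).smul_of_nonneg ha
  · rw [le_def, sub_sub_cancel]
    exact ((nonneg_iff_isPositive T).1 hT.1).smul_of_nonneg ha

theorem mem_Icc_smul_one_of_inner {T : E →ₗ[ℝ] E} {c : ℝ} (hT : T.IsSymmetric)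
    (h : ∀ x, 0 ≤ ⟪T x, x⟫_ℝ ∧ ⟪T x, x⟫_ℝ ≤ c * ‖x‖ ^ 2) : T ∈ Set.Icc 0 (c • 1) := by
  refine ⟨(nonneg_iff_isPositive T).2 ((isPositive_iff T).2 ⟨hT, fun x => (h x).1⟩),
    (isPositive_iff _).2 ⟨(IsSymmetric.id.smul RCLike.conj_to_real).sub hT, fun x => ?_⟩⟩
  rw [sub_apply, inner_sub_left, smul_apply, one_apply, real_inner_smul_left,
    real_inner_self_eq_norm_sq, sub_nonneg]
  exact (h x).2

variable [FiniteDimensional ℝ E]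

theorem inner_map_le_inner_map_of_le {P Q T : E →ₗ[ℝ] E} (hPQ : P ≤ Q) (hT : 0 ≤ T)
    (hP : Commute P T) (hQ : Commute Q T) (v : E) : ⟪P v, T v⟫_ℝ ≤ ⟪Q v, T v⟫_ℝ := by
  have hQP : (Q - P).IsPositive := hPQ
  have := (hQP.mul_of_commute ((nonneg_iff_isPositive T).1 hT) (hQ.sub_left hP)).inner_nonneg_left v
  rwa [mul_apply, hQP.isSymmetric, real_inner_comm, sub_apply, inner_sub_left, sub_nonneg] at this

theorem inner_map_mem_Icc {P T : E →ₗ[ℝ] E} {β : ℝ} (hP : P ∈ Set.Icc (β • 1) 1) (hT : 0 ≤ T)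
    (hPT : Commute P T) (v : E) : ⟪P v, T v⟫_ℝ ∈ Set.Icc (β * ⟪v, T v⟫_ℝ) ⟪v, T v⟫_ℝ := by
  have hlo := inner_map_le_inner_map_of_le hP.1 hT ((Commute.one_left T).smul_left β) hPT v
  have hhi := inner_map_le_inner_map_of_le hP.2 hT hPT (Commute.one_left T) v
  rw [smul_apply, one_apply, real_inner_smul_left] at hlo
  rw [one_apply] at hhi
  exact ⟨hlo, hhi⟩

theorem list_prod_map_mem_Icc {ι : Type*} (L : List ι) {B : ι → E →ₗ[ℝ] E} {β : ℝ} (hβ : 0 ≤ β)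
    (hB : ∀ k ∈ L, B k ∈ Set.Icc (β • 1) 1) (hC : ∀ k l, Commute (B k) (B l)) :
    (L.map B).prod ∈ Set.Icc (β ^ L.length • 1) 1 := by
  induction L with
  | nil => simp
  | cons k L ih =>
    obtain ⟨hRlo, hRhi⟩ := ih fun l hl => hB l (List.mem_cons_of_mem k hl)
    obtain ⟨hBlo, hBhi⟩ := hB k List.mem_cons_self
    set R := (L.map B).prod
    have hBR : Commute (B k) R := Commute.list_prod_right _ _ fun _ hl => by
      obtain ⟨l, -, rfl⟩ := List.mem_map.1 hl
      exact hC k l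
    have hR : R.IsPositive :=
      (nonneg_iff_isPositive _).1 ((smul_one_nonneg (pow_nonneg hβ _)).trans hRlo)
    have hBk : (B k).IsPositive := (nonneg_iff_isPositive _).1 ((smul_one_nonneg hβ).trans hBlo)
    rw [List.map_cons, List.prod_cons, List.length_cons]
    constructor
    · rw [le_def, show B k * R - β ^ (L.length + 1) • (1 : E →ₗ[ℝ] E)
          = (B k - β • 1) * R + β • (R - β ^ L.length • 1) by
        rw [pow_succ', mul_smul, sub_mul, smul_sub, smul_one_mul]; abel]
      exact ((hBlo : (B k - β • 1).IsPositive).mul_of_commute hR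
        (hBR.sub_left ((Commute.one_left R).smul_left β))).add
        ((hRlo : (R - β ^ L.length • 1).IsPositive).smul_of_nonneg hβ)
    · rw [le_def, show 1 - B k * R = (1 - B k) + B k * (1 - R) by noncomm_ring]
      exact (hBhi : (1 - B k).IsPositive).add
        (hBk.mul_of_commute (hRhi : (1 - R).IsPositive) ((Commute.one_right _).sub_right hBR))

end LinearMap

namespace Grid

variable {d : ℕ} (m : Fin d → ℕ)

def interiorPts : Finset (Fin d → ℕ) := Fintype.piFinset fun k => Finset.Icc 1 (m k - 1)

def edges (k : Fin d) : Finset (Fin d → ℕ) :=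
  Fintype.piFinset fun l => if l = k then Finset.range (m l) else Finset.Icc 1 (m l - 1)

variable {m}

theorem mem_interiorPts {j : Fin d → ℕ} : j ∈ interiorPts m ↔ interiorIdx d m j := by
  simp [interiorPts, interiorIdx]

theorem mem_edges {k : Fin d} {j : Fin d → ℕ} :
    j ∈ edges m k ↔ j k < m k ∧ ∀ l ≠ k, 1 ≤ j l ∧ j l ≤ m l - 1 := by
  simp only [edges, Fintype.mem_piFinset]
  refine ⟨fun h => ⟨by simpa using h k, fun l hl => by simpa [hl] using h l⟩, fun h l => ?_⟩
  rcases eq_or_ne l k with rfl | hl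
  · simpa using h.1
  · simpa [hl] using h.2 l hl

theorem up_apply (k l : Fin d) (j : Fin d → ℕ) : up k j l = if l = k then j k + 1 else j l := by
  simp [up, Function.update_apply]

theorem down_apply (k l : Fin d) (j : Fin d → ℕ) : down k j l = if l = k then j k - 1 else j l := by
  simp [down, Function.update_apply]

theorem down_up (k : Fin d) (j : Fin d → ℕ) : down k (up k j) = j := by
  ext l; rcases eq_or_ne l k with rfl | h <;> simp [down_apply, up_apply, *]

theorem up_down {k : Fin d} {j : Fin d → ℕ} (h : 1 ≤ j k) : up k (down k j) = j := by
  ext l; rcases eq_or_ne l k with rfl | hl <;> simp [down_apply, up_apply, Nat.sub_add_cancel, *]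

theorem up_injective (k : Fin d) : Function.Injective (up (d := d) k) :=
  Function.LeftInverse.injective (down_up k)

section Sums

variable {k : Fin d} {F : (Fin d → ℕ) → ℝ}

theorem sum_edges_eq_sum_interiorPts (hF : ∀ j ∉ interiorPts m, F j = 0) :
    ∑ j ∈ edges m k, F j = ∑ j ∈ interiorPts m, F j := by
  refine (Finset.sum_subset (fun j hj => ?_) fun j _ hj => hF j hj).symm
  rw [mem_interiorPts] at hj
  exact mem_edges.2 ⟨by have := hj k; omega, fun l _ => hj l⟩

theorem sum_edges_comp_up (hF : ∀ j ∉ interiorPts m, F j = 0) :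
    ∑ j ∈ edges m k, F (up k j) = ∑ j ∈ interiorPts m, F j := by
  refine Finset.sum_bij_ne_zero (fun j _ _ => up k j) (fun j _ hj => ?_)
    (fun _ _ _ _ _ _ h => up_injective k h) (fun j hj _ => ?_) fun _ _ _ => rfl
  · by_contra h; exact hj (hF _ h)
  · rw [mem_interiorPts] at hj
    refine ⟨down k j, mem_edges.2 ⟨?_, fun l hl => ?_⟩, ?_, up_down (hj k).1⟩
    · rw [down_apply, if_pos rfl]; have := hj k; omega
    · rw [down_apply, if_neg hl]; exact hj l
    · rwa [up_down (hj k).1]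

end Sums

section SummationByParts

variable {Δx : Fin d → ℝ} {k : Fin d} {u : (Fin d → ℕ) → ℝ}

theorem _root_.zeroBnd.eq_zero (hu : zeroBnd m u) {j : Fin d → ℕ} (hj : j ∉ interiorPts m) :
    u j = 0 :=
  hu j fun h => hj (mem_interiorPts.2 h)

theorem sum_mul_neg_d2 (hΔx : Δx k ≠ 0) (hu : zeroBnd m u) (w : (Fin d → ℕ) → ℝ) :
    ∑ j ∈ interiorPts m, u j * -d2 Δx k w j =
      ∑ j ∈ edges m k, (u (up k j) - u j) / Δx k * ((w (up k j) - w j) / Δx k) := by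
  have hF : ∀ g : (Fin d → ℕ) → ℝ, ∀ j ∉ interiorPts m, u j * g j = 0 := fun g j hj => by
    rw [hu.eq_zero hj, zero_mul]
  have h1 := sum_edges_comp_up (k := k) (hF w)
  have h2 := sum_edges_comp_up (k := k) (hF fun j => w (down k j))
  have h3 := sum_edges_eq_sum_interiorPts (k := k) (hF fun j => w (up k j))
  have h4 := sum_edges_eq_sum_interiorPts (k := k) (hF w)
  simp only [down_up] at h2
  have hl : ∀ j, u j * -d2 Δx k w j =
      (2 * (u j * w j) - u j * w (up k j) - u j * w (down k j)) / Δx k ^ 2 := fun j => by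
    rw [d2]; field_simp; ring
  have hr : ∀ j, (u (up k j) - u j) / Δx k * ((w (up k j) - w j) / Δx k) =
      (u (up k j) * w (up k j) - u (up k j) * w j - u j * w (up k j) + u j * w j) / Δx k ^ 2 :=
    fun j => by field_simp; ring
  simp only [hl, hr, ← Finset.sum_div, Finset.sum_add_distrib, Finset.sum_sub_distrib,
    ← Finset.mul_sum, h1, h2, h3, h4]
  ring

theorem sum_edges_sq_le (hu : zeroBnd m u) :
    ∑ j ∈ edges m k, ((u (up k j) - u j) / Δx k) ^ 2 ≤
      4 / Δx k ^ 2 * ∑ j ∈ interiorPts m, u j ^ 2 := by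
  have hF : ∀ j ∉ interiorPts m, u j ^ 2 = 0 := fun j hj => by rw [hu.eq_zero hj]; ring
  calc ∑ j ∈ edges m k, ((u (up k j) - u j) / Δx k) ^ 2
      ≤ ∑ j ∈ edges m k, (2 * u (up k j) ^ 2 + 2 * u j ^ 2) / Δx k ^ 2 := by
        gcongr with j
        rw [div_pow]
        gcongr
        nlinarith [sq_nonneg (u (up k j) + u j)]
    _ = 4 / Δx k ^ 2 * ∑ j ∈ interiorPts m, u j ^ 2 := by
        rw [← Finset.sum_div, Finset.sum_add_distrib, ← Finset.mul_sum, ← Finset.mul_sum,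
          sum_edges_comp_up hF, sum_edges_eq_sum_interiorPts hF]
        ring

end SummationByParts

section Commutation

variable {k l : Fin d} (h : k ≠ l) (j : Fin d → ℕ)
include h

theorem up_up_comm : up k (up l j) = up l (up k j) := by
  ext r; simp only [up_apply]; split_ifs <;> simp_all

theorem up_down_comm : up k (down l j) = down l (up k j) := by
  ext r; simp only [up_apply, down_apply]; split_ifs <;> simp_all

theorem down_down_comm : down k (down l j) = down l (down k j) := by
  ext r; simp only [down_apply]; split_ifs <;> simp_all

theorem d2_d2_comm (Δx : Fin d → ℝ) (u : (Fin d → ℕ) → ℝ) :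
    d2 Δx k (d2 Δx l u) j = d2 Δx l (d2 Δx k u) j := by
  simp only [d2]
  rw [up_up_comm h, up_down_comm h, up_down_comm h.symm, down_down_comm h]
  ring

end Commutation

/-- `°U` is modelled by `GridSpace m`: `extend` (by zero) and `restrict` identify the two. -/
abbrev GridSpace (m : Fin d → ℕ) := EuclideanSpace ℝ (interiorPts m)

variable (m) in
def extend : GridSpace m →ₗ[ℝ] (Fin d → ℕ) → ℝ where
  toFun v j := if h : j ∈ interiorPts m then v ⟨j, h⟩ else 0
  map_add' v w := by ext j; by_cases h : j ∈ interiorPts m <;> simp [h]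
  map_smul' c v := by ext j; by_cases h : j ∈ interiorPts m <;> simp [h]

variable (m) in
def restrict (u : (Fin d → ℕ) → ℝ) : GridSpace m := WithLp.toLp 2 fun i => u i

section Extend

variable (v : GridSpace m)

theorem extend_apply_coe (i : interiorPts m) : extend m v i = v i := by
  simp [extend]

theorem extend_apply_of_notMem {j : Fin d → ℕ} (hj : j ∉ interiorPts m) : extend m v j = 0 := by
  simp [extend, hj]

theorem zeroBnd_extend : zeroBnd m (extend m v) :=
  fun _ hj => extend_apply_of_notMem v fun h => hj (mem_interiorPts.1 h)

theorem extend_restrict {u : (Fin d → ℕ) → ℝ} (hu : zeroBnd m u) : extend m (restrict m u) = u := by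
  ext j
  by_cases hj : j ∈ interiorPts m
  · exact extend_apply_coe _ ⟨j, hj⟩
  · rw [extend_apply_of_notMem _ hj, hu.eq_zero hj]

theorem inner_eq_sum_extend (x y : GridSpace m) :
    ⟪x, y⟫_ℝ = ∑ j ∈ interiorPts m, extend m x j * extend m y j := by
  rw [← Finset.sum_coe_sort, PiLp.inner_apply]
  refine Finset.sum_congr rfl fun i _ => ?_
  rw [extend_apply_coe, extend_apply_coe, real_inner_eq_re_inner, mul_comm]
  rfl

end Extend

section NegD2

variable (m) (Δx : Fin d → ℝ)

def negD2 (k : Fin d) : GridSpace m →ₗ[ℝ] GridSpace m where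
  toFun v := restrict m (-d2 Δx k (extend m v))
  map_add' v w := by
    ext i
    simp only [restrict, map_add, Pi.neg_apply, d2, Pi.add_apply, PiLp.add_apply]
    ring
  map_smul' c v := by
    ext i
    simp only [restrict, map_smul, Pi.neg_apply, d2, Pi.smul_apply, smul_eq_mul,
      RingHom.id_apply, PiLp.smul_apply]
    ring

variable {m Δx}

theorem extend_negD2_of_mem (k : Fin d) (v : GridSpace m) {j : Fin d → ℕ}
    (hj : j ∈ interiorPts m) : extend m (negD2 m Δx k v) j = -d2 Δx k (extend m v) j :=
  extend_apply_coe _ ⟨j, hj⟩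

theorem inner_negD2 {k : Fin d} (hΔx : Δx k ≠ 0) (x y : GridSpace m) :
    ⟪x, negD2 m Δx k y⟫_ℝ = ∑ j ∈ edges m k, (extend m x (up k j) - extend m x j) / Δx k *
      ((extend m y (up k j) - extend m y j) / Δx k) := by
  rw [inner_eq_sum_extend, ← sum_mul_neg_d2 hΔx (zeroBnd_extend x)]
  exact Finset.sum_congr rfl fun j hj => by rw [extend_negD2_of_mem k y hj]

theorem negD2_isSymmetric {k : Fin d} (hΔx : Δx k ≠ 0) : (negD2 m Δx k).IsSymmetric := by
  intro x y
  rw [real_inner_comm, inner_negD2 hΔx, inner_negD2 hΔx]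
  exact Finset.sum_congr rfl fun _ _ => mul_comm _ _

theorem negD2_mem_Icc {k : Fin d} (hΔx : 0 < Δx k) :
    negD2 m Δx k ∈ Set.Icc 0 ((4 / Δx k ^ 2) • 1) := by
  refine LinearMap.mem_Icc_smul_one_of_inner (negD2_isSymmetric hΔx.ne') fun x => ?_
  rw [real_inner_comm, inner_negD2 hΔx.ne', ← real_inner_self_eq_norm_sq, inner_eq_sum_extend]
  simp only [← pow_two]
  exact ⟨Finset.sum_nonneg fun _ _ => sq_nonneg _, sum_edges_sq_le (zeroBnd_extend x)⟩

section Commute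

variable {k l : Fin d}

theorem d2_extend_eq_zero (hkl : k ≠ l) (v : GridSpace m) {p : Fin d → ℕ}
    (hp : ¬(1 ≤ p k ∧ p k ≤ m k - 1)) : d2 Δx l (extend m v) p = 0 := by
  have hq : ∀ q : Fin d → ℕ, q k = p k → extend m v q = 0 := fun q hq =>
    zeroBnd_extend v q fun h => hp (hq ▸ h k)
  rw [d2, hq _ (by rw [up_apply, if_neg hkl]), hq p rfl, hq _ (by rw [down_apply, if_neg hkl])]
  ring

/-- Discarding the boundary values of `δ_l² u` is invisible to `δ_k²` with `k ≠ l`: where `p k` is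
on the boundary, `u ∈ °U` vanishes at `p` and at both of its `l`-neighbours. -/
theorem extend_negD2_of_ne (hkl : k ≠ l) (v : GridSpace m) {p : Fin d → ℕ}
    (hp : ∀ r ≠ k, 1 ≤ p r ∧ p r ≤ m r - 1) :
    extend m (negD2 m Δx l v) p = -d2 Δx l (extend m v) p := by
  by_cases hmem : p ∈ interiorPts m
  · exact extend_negD2_of_mem l v hmem
  have hpk : ¬(1 ≤ p k ∧ p k ≤ m k - 1) := fun hk =>
    hmem (mem_interiorPts.2 fun r => if hr : r = k then hr ▸ hk else hp r hr)
  rw [extend_apply_of_notMem _ hmem, d2_extend_eq_zero hkl v hpk, neg_zero]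

theorem negD2_negD2_apply (hkl : k ≠ l) (v : GridSpace m) (i : interiorPts m) :
    negD2 m Δx k (negD2 m Δx l v) i = d2 Δx k (d2 Δx l (extend m v)) i := by
  have hi := mem_interiorPts.1 i.2
  have hup : ∀ r ≠ k, 1 ≤ up k i.1 r ∧ up k i.1 r ≤ m r - 1 := fun r hr => by
    rw [up_apply, if_neg hr]; exact hi r
  have hdown : ∀ r ≠ k, 1 ≤ down k i.1 r ∧ down k i.1 r ≤ m r - 1 := fun r hr => by
    rw [down_apply, if_neg hr]; exact hi r
  show -d2 Δx k (extend m (negD2 m Δx l v)) i = _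
  simp only [d2]
  rw [extend_negD2_of_ne hkl v hup, extend_negD2_of_ne hkl v fun r _ => hi r,
    extend_negD2_of_ne hkl v hdown]
  simp only [d2]
  ring

theorem negD2_commute (k l : Fin d) : Commute (negD2 m Δx k) (negD2 m Δx l) := by
  rcases eq_or_ne k l with rfl | hkl
  · exact Commute.refl _
  refine LinearMap.ext fun v => PiLp.ext fun i => ?_
  rw [Module.End.mul_apply, Module.End.mul_apply, negD2_negD2_apply hkl,
    negD2_negD2_apply hkl.symm, d2_d2_comm hkl]

end Commute

end NegD2

section Averaging

variable (m) (Δx : Fin d → ℝ)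

def averageOp (k : Fin d) : GridSpace m →ₗ[ℝ] GridSpace m := 1 - (Δx k ^ 2 / 12) • negD2 m Δx k

variable {m Δx}

theorem Aop_extend {k : Fin d} (hΔx : Δx k ≠ 0) (v : GridSpace m) :
    Aop m k (extend m v) = extend m (averageOp m Δx k v) := by
  ext j
  by_cases hj : j ∈ interiorPts m
  · rw [Aop, if_pos (mem_interiorPts.1 hj), averageOp, LinearMap.sub_apply, LinearMap.smul_apply,
      Module.End.one_apply, map_sub, map_smul, Pi.sub_apply, Pi.smul_apply, smul_eq_mul,
      extend_negD2_of_mem k v hj, d2]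
    field_simp
    ring
  · rw [Aop, if_neg (mt mem_interiorPts.2 hj), extend_apply_of_notMem _ hj,
      extend_apply_of_notMem _ hj]

theorem foldr_Aop_extend (hΔx : ∀ k, Δx k ≠ 0) (L : List (Fin d)) (v : GridSpace m) :
    L.foldr (fun k w => Aop m k w) (extend m v) = extend m ((L.map (averageOp m Δx)).prod v) := by
  induction L with
  | nil => rfl
  | cons k L ih => rw [List.foldr_cons, ih, Aop_extend (hΔx k)]; rfl

theorem averageOp_mem_Icc {k : Fin d} (hΔx : 0 < Δx k) :
    averageOp m Δx k ∈ Set.Icc ((2 / 3 : ℝ) • 1) 1 := by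
  have h := LinearMap.one_sub_smul_mem_Icc (a := Δx k ^ 2 / 12) (by positivity)
    (negD2_mem_Icc (m := m) hΔx)
  rwa [show 1 - Δx k ^ 2 / 12 * (4 / Δx k ^ 2) = (2 / 3 : ℝ) by field_simp; norm_num] at h

theorem averageOp_commute_negD2 (k l : Fin d) : Commute (averageOp m Δx k) (negD2 m Δx l) :=
  (Commute.one_left _).sub_left ((negD2_commute k l).smul_left _)

theorem averageOp_commute (k l : Fin d) : Commute (averageOp m Δx k) (averageOp m Δx l) :=
  ((Commute.one_right _).sub_right ((averageOp_commute_negD2 k l).smul_right _))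

end Averaging

section Forms

variable {Δx : Fin d → ℝ}

theorem ip_extend_neg_lapH (x v : GridSpace m) :
    ip m Δx (extend m x) (-lapH Δx (extend m v)) = (∏ r, Δx r) * ∑ k, ⟪x, negD2 m Δx k v⟫_ℝ := by
  show (∏ r, Δx r) * ∑ j ∈ interiorPts m, _ = _
  simp only [inner_eq_sum_extend]
  rw [Finset.sum_comm]
  refine congrArg _ (Finset.sum_congr rfl fun j hj => ?_)
  rw [Pi.neg_apply, lapH, ← Finset.sum_neg_distrib, Finset.mul_sum]
  exact Finset.sum_congr rfl fun k _ => by rw [extend_negD2_of_mem k v hj]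

theorem norm1sq_extend (hΔx : ∀ k, Δx k ≠ 0) (v : GridSpace m) :
    norm1sq m Δx (extend m v) = (∏ r, Δx r) * ∑ k, ⟪v, negD2 m Δx k v⟫_ℝ := by
  rw [norm1sq, Finset.mul_sum]
  refine Finset.sum_congr rfl fun k _ => ?_
  rw [semi1sq, inner_negD2 (hΔx k)]
  exact congrArg _ (Finset.sum_congr rfl fun j _ => sq _)

end Forms

end Grid

open Grid

theorem stmt_8_general (d : ℕ) (m : Fin d → ℕ)
    (Δx : Fin d → ℝ) (hΔx : ∀ k, 0 < Δx k)
    (u : (Fin d → ℕ) → ℝ) (hu : zeroBnd m u) :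
    (2/3 : ℝ) ^ d * norm1sq m Δx u ≤ ip m Δx (Ah m u) (-(lapH Δx u))
    ∧ ip m Δx (Ah m u) (-(lapH Δx u)) ≤ norm1sq m Δx u := by
  set v := restrict m u
  set P := ((List.finRange d).map (averageOp m Δx)).prod
  have hP : P ∈ Set.Icc ((2 / 3 : ℝ) ^ d • 1) 1 := by
    have := LinearMap.list_prod_map_mem_Icc (B := averageOp m Δx) (List.finRange d) (by norm_num)
      (fun k _ => averageOp_mem_Icc (hΔx k)) averageOp_commute
    rwa [List.length_finRange] at this
  have hform : ∀ k, ⟪P v, negD2 m Δx k v⟫_ℝ ∈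
      Set.Icc ((2 / 3) ^ d * ⟪v, negD2 m Δx k v⟫_ℝ) ⟪v, negD2 m Δx k v⟫_ℝ := fun k =>
    LinearMap.inner_map_mem_Icc hP (negD2_mem_Icc (hΔx k)).1
      (Commute.list_prod_left _ _ fun _ hA => by
        obtain ⟨l, -, rfl⟩ := List.mem_map.1 hA
        exact averageOp_commute_negD2 l k) v
  have hvol : 0 ≤ ∏ r, Δx r := Finset.prod_nonneg fun r _ => (hΔx r).le
  have hΔx' : ∀ k, Δx k ≠ 0 := fun k => (hΔx k).ne'
  rw [← extend_restrict hu, Ah, foldr_Aop_extend hΔx', ip_extend_neg_lapH, norm1sq_extend hΔx']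
  constructor
  · rw [mul_left_comm, Finset.mul_sum]
    gcongr with k
    exact (hform k).1
  · gcongr with k
    exact (hform k).2

/-- For every `u ∈ °U`: `(2/3)^d |u|₁² ≤ (A_h u, −Δ_h u) ≤ |u|₁²`. -/
theorem stmt_8 (d : ℕ) (hd : 1 ≤ d) (m : Fin d → ℕ) (hm : ∀ k, 2 ≤ m k)
    (Δx : Fin d → ℝ) (hΔx : ∀ k, 0 < Δx k)
    (u : (Fin d → ℕ) → ℝ) (hu : zeroBnd m u) :
    (2/3 : ℝ) ^ d * norm1sq m Δx u ≤ ip m Δx (Ah m u) (-(lapH Δx u))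
    ∧ ip m Δx (Ah m u) (-(lapH Δx u)) ≤ norm1sq m Δx u :=
  stmt_8_general d m Δx hΔx u hu
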